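/- Let φ ∈ U be a solution of 𝓕(φ) = 0, and define φ̃ : [0,1] → 𝓗 by φ̃( (∫₀^α |φ'(s)|ds)/L(φ) ) := φ(α) for α ∈ [0,1] (reparameterization by normalized arc length). Then φ̃ ∈ U and φ̃ solves the MEP problem: P^⊥_{φ̃'(α)}∇E(φ̃(α)) = 0 for all α ∈ [0,1] and Γ(φ̃) ≡ 0. -/

import Mathlib

noncomputable section

open Set
open scoped RealInnerProductSpace Topology

variable {H : Type*} [NormedAddCommGroup H] [InnerProductSpace ℝ H] [CompleteSpace H]

/-- Orthogonal projection of `y` onto the span of `v` (`P_v y`). -/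
def Pproj (v y : H) : H := ⟪y, ‖v‖⁻¹ • v⟫ • (‖v‖⁻¹ • v)

/-- Projection of `y` onto the orthogonal complement of `v` (`P_v^⊥ y`). -/
def Pperp (v y : H) : H := y - Pproj v y

/-- `f` is `C¹` on `[a,b]` with derivative `f'`. -/
def C1On {F : Type*} [NormedAddCommGroup F] [NormedSpace ℝ F] (a b : ℝ) (f f' : ℝ → F) : Prop :=
  (∀ α ∈ Icc a b, HasDerivWithinAt f (f' α) (Icc a b) α) ∧ ContinuousOn f' (Icc a b)

/-- `f` is `C²` on `[a,b]`. -/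
def C2On {F : Type*} [NormedAddCommGroup F] [NormedSpace ℝ F] (a b : ℝ) (f f' f'' : ℝ → F) : Prop :=
  C1On a b f f' ∧ C1On a b f' f''

/-- The length `L(φ)` of a curve with derivative `φ'`. -/
def len {F : Type*} [NormedAddCommGroup F] (φ' : ℝ → F) : ℝ := ∫ s in (0:ℝ)..1, ‖φ' s‖

/-- `Γ(φ)(α) = ∫₀^α |φ'| − α L(φ)`. -/
def Gam {F : Type*} [NormedAddCommGroup F] (φ' : ℝ → F) (α : ℝ) : ℝ :=
  (∫ s in (0:ℝ)..α, ‖φ' s‖) - α * len φ'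

/-- The admissible class `U` of regular curves joining `yA` to `yB`. -/
def InU (yA yB : H) (φ φ' : ℝ → H) : Prop :=
  C1On 0 1 φ φ' ∧ φ 0 = yA ∧ φ 1 = yB ∧ ∀ α ∈ Icc (0:ℝ) 1, φ' α ≠ 0

/-- The MEP equations. -/
def SolvesMEP (E : H → ℝ) (φ φ' : ℝ → H) : Prop :=
  (∀ α ∈ Icc (0:ℝ) 1, Pperp (φ' α) (gradient E (φ α)) = 0) ∧
  (∀ α ∈ Icc (0:ℝ) 1, Gam φ' α = 0)

/-- Strong local minimizer. -/
def IsStrongMin (E : H → ℝ) (hess : H → H →L[ℝ] H) (y : H) : Prop :=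
  gradient E y = 0 ∧ ∃ c > 0, ∀ u : H, c * ‖u‖ ^ 2 ≤ ⟪hess y u, u⟫

/-- Index-1 saddle point. -/
def IsIndex1Saddle (E : H → ℝ) (hess : H → H →L[ℝ] H) (y : H) : Prop :=
  gradient E y = 0 ∧
    ∃ v₁ : H, v₁ ≠ 0 ∧ (∃ l < (0:ℝ), hess y v₁ = l • v₁) ∧
      ∃ c > 0, ∀ u : H, ⟪u, v₁⟫ = 0 → c * ‖u‖ ^ 2 ≤ ⟪hess y u, u⟫

/-- Assumption (A). -/
def AssumpA (E : H → ℝ) (hess : H → H →L[ℝ] H) (yA yB : H)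
    (φb φb' φb'' : ℝ → H) (sbar : ℝ) : Prop :=
  C2On 0 1 φb φb' φb'' ∧ InU yA yB φb φb' ∧ SolvesMEP E φb φb' ∧
  sbar ∈ Ioo (0:ℝ) 1 ∧
  IsStrongMin E hess yA ∧ IsStrongMin E hess yB ∧
  IsIndex1Saddle E hess (φb sbar) ∧
  ∀ α ∈ Icc (0:ℝ) 1, gradient E (φb α) = 0 → α = 0 ∨ α = sbar ∨ α = 1

/-- `λ̄(α) = L(φ̄)⁻² (∇E(φ̄(α)), φ̄'(α))`. -/
def lamBar (E : H → ℝ) (φ φ' : ℝ → H) (α : ℝ) : ℝ :=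
  ((len φ') ^ 2)⁻¹ * ⟪gradient E (φ α), φ' α⟫

/-- The MEP operator `𝓕`. -/
def Fop (E : H → ℝ) (sbar σA σB : ℝ) (φ φ' : ℝ → H) (α : ℝ) : H :=
  Pperp (φ' α) (gradient E (φ α))
    - ((‖φ' α‖ - len φ') / len φ') • Pproj (φ' α) (gradient E (φ α))
    + (α * (α - 1) * ‖φ' α‖ / (sbar * (sbar - 1) * len φ')) •
        Pproj (φ' α) (gradient E (φ sbar))
    + ((σA + σB) * (Gam φ' α - α * (α - 1) / (sbar * (sbar - 1)) * Gam φ' sbar)) •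
        (‖φ' α‖⁻¹ • φ' α)

/-- Membership in the image space `Y`. -/
def MemY {F : Type*} [NormedAddCommGroup F] [NormedSpace ℝ F] (sbar : ℝ) (f : ℝ → F) : Prop :=
  ContinuousOn f (Icc (0:ℝ) 1) ∧ f 0 = 0 ∧ f 1 = 0 ∧
  DifferentiableWithinAt ℝ f (Icc (0:ℝ) 1) 0 ∧
  DifferentiableWithinAt ℝ f (Icc (0:ℝ) 1) sbar ∧
  DifferentiableWithinAt ℝ f (Icc (0:ℝ) 1) 1

/-- Membership in the space `X`. -/
def MemX {F : Type*} [NormedAddCommGroup F] [NormedSpace ℝ F] (ψ ψ' : ℝ → F) : Prop :=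
  C1On 0 1 ψ ψ' ∧ ψ 0 = 0 ∧ ψ 1 = 0

/-- The `C¹` (and `X`) norm. -/
def normC1 {F : Type*} [NormedAddCommGroup F] (ψ ψ' : ℝ → F) : ℝ :=
  (⨆ α : Icc (0:ℝ) 1, ‖ψ (α : ℝ)‖) + ⨆ α : Icc (0:ℝ) 1, ‖ψ' (α : ℝ)‖

/-- The weighted norm on `Y`. -/
def normY {F : Type*} [NormedAddCommGroup F] (sbar : ℝ) (f : ℝ → F) : ℝ :=
  (⨆ α : Ioo (0:ℝ) 1, ‖f (α : ℝ)‖ / |(α : ℝ) * ((α : ℝ) - 1)|) +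
    ⨆ α : ↥(Icc (0:ℝ) 1 \ {sbar}), ‖f (α : ℝ) - f sbar‖ / |(α : ℝ) - sbar|

/-- `∫₀¹ (φ̄'(s), ψ'(s))/|φ̄'(s)| ds`. -/
def gInt (φb' ψ' : ℝ → H) : ℝ := ∫ s in (0:ℝ)..1, ⟪φb' s, ψ' s⟫ / ‖φb' s‖

/-- `g_ψ(α)` (the linearisation `δΓ(φ̄)ψ`). -/
def gFun (φb' ψ' : ℝ → H) (α : ℝ) : ℝ :=
  (∫ s in (0:ℝ)..α, ⟪φb' s, ψ' s⟫ / ‖φb' s‖) - α * gInt φb' ψ'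

/-- `g_ψ'(α)`. -/
def gFun' (φb' ψ' : ℝ → H) (α : ℝ) : ℝ := ⟪φb' α, ψ' α⟫ / ‖φb' α‖ - gInt φb' ψ'

/-- The linearised MEP operator `T = δ𝓕(φ̄)`. -/
def Tlin (E : H → ℝ) (hess : H → H →L[ℝ] H) (φb φb' : ℝ → H)
    (sbar σA σB : ℝ) (ψ ψ' : ℝ → H) (α : ℝ) : H :=
  Pperp (φb' α) (hess (φb α) (ψ α) - lamBar E φb φb' α • ψ' α)
    + (α * (α - 1) / (sbar * (sbar - 1))) • Pproj (φb' α) (hess (φb sbar) (ψ sbar))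
    + ((σA + σB) * (gFun φb' ψ' α - α * (α - 1) / (sbar * (sbar - 1)) * gFun φb' ψ' sbar)
        - lamBar E φb φb' α * gFun' φb' ψ' α) • (‖φb' α‖⁻¹ • φb' α)

/-- Assumption (B). -/
def AssumpB (hess : H → H →L[ℝ] H) (yA yB vA vB : H) (σA σB : ℝ) : Prop :=
  hess yA vA = σA • vA ∧ hess yB vB = σB • vB ∧
  (∀ μ ∈ spectrum ℝ (hess yA), σA ≤ μ) ∧
  (∀ μ ∈ spectrum ℝ (hess yB), σB ≤ μ) ∧
  (∃ ε > 0, ∀ μ ∈ spectrum ℝ (hess yA), μ ≠ σA → σA + ε ≤ μ) ∧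
  (∃ ε > 0, ∀ μ ∈ spectrum ℝ (hess yB), μ ≠ σB → σB + ε ≤ μ) ∧
  (∀ u : H, hess yA u = σA • u → ∃ c : ℝ, u = c • vA) ∧
  (∀ u : H, hess yB u = σB • u → ∃ c : ℝ, u = c • vB)

/-- `P_v` as a continuous linear map. -/
def projL (v : H) : H →L[ℝ] H := (innerSL ℝ (‖v‖⁻¹ • v)).smulRight (‖v‖⁻¹ • v)

/-- `P_v^⊥` as a continuous linear map. -/
def projPerpL (v : H) : H →L[ℝ] H := ContinuousLinearMap.id ℝ H - projL v

/-- `B(α) = P⊥ ∇²E(φ̄(α)) P⊥`. -/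
def Bop (hess : H → H →L[ℝ] H) (φb φb' : ℝ → H) (α : ℝ) : H →L[ℝ] H :=
  (projPerpL (φb' α)).comp ((hess (φb α)).comp (projPerpL (φb' α)))

/-- `D(α) y = −(y,t'(α))t(α) − (y,t(α))t'(α)`. -/
def Dop (t t' : ℝ → H) (α : ℝ) : H →L[ℝ] H :=
  -((innerSL ℝ (t' α)).smulRight (t α)) - (innerSL ℝ (t α)).smulRight (t' α)

/-- The operator `A(α)`. -/
def Aop {K : Type*} [NormedAddCommGroup K] [InnerProductSpace ℝ K] [CompleteSpace K]
    (E : H → ℝ) (hess : H → H →L[ℝ] H) (φb φb' t' : ℝ → H)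
    (Q Q' : ℝ → K →L[ℝ] H) (α : ℝ) : K →L[ℝ] K :=
  (ContinuousLinearMap.adjoint (Q α)).comp ((Bop hess φb φb' α).comp (Q α))
    - lamBar E φb φb' α •
        ((ContinuousLinearMap.adjoint (Q α)).comp
            ((Dop (fun s => ‖φb' s‖⁻¹ • φb' s) t' α).comp (Q α))
          - (ContinuousLinearMap.adjoint (Q α)).comp (Q' α))

/-- `ω_S`. -/
def omegaS (hess : H → H →L[ℝ] H) (yS : H) : ℝ :=
  sInf {l : ℝ | l ∈ spectrum ℝ (hess yS) ∧ 0 < l}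

/-- `ω_B`. -/
def omegaB (hess : H → H →L[ℝ] H) (yB : H) (σB : ℝ) : ℝ :=
  sInf {l : ℝ | l ∈ spectrum ℝ (hess yB) ∧ l ≠ σB}

/-- The tube `𝒰_ε` around the path. -/
def Utube (φb : ℝ → H) (ε : ℝ) : Set H := {y : H | ∃ α ∈ Icc (0:ℝ) 1, ‖y - φb α‖ ≤ ε}

/-- Restriction of a second derivative to a subspace. -/
def restrict2 (K : Submodule ℝ H) (T : H →L[ℝ] H →L[ℝ] ℝ) : K →L[ℝ] K →L[ℝ] ℝ :=
  (((ContinuousLinearMap.compL ℝ K H ℝ).flip K.subtypeL)).comp (T.comp K.subtypeL)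

/-- `C⁰` distance between `E'` (on the subspace `K`) and `E`, over `S`. -/
def subC0dist (K : Submodule ℝ H) (E : H → ℝ) (E' : K → ℝ) (S : Set K) : ℝ :=
  ⨆ y : S, |E' y.1 - E (y.1 : H)|

/-- `C¹` distance between `E'` (on the subspace `K`) and `E`, over `S`. -/
def subC1dist (K : Submodule ℝ H) (E : H → ℝ) (E' : K → ℝ) (S : Set K) : ℝ :=
  subC0dist K E E' S +
    ⨆ y : S, ‖fderiv ℝ E' y.1 - (fderiv ℝ E (y.1 : H)).comp K.subtypeL‖

/-- `C²` distance between `E'` (on the subspace `K`) and `E`, over `S`. -/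
def subC2dist (K : Submodule ℝ H) (E : H → ℝ) (E' : K → ℝ) (S : Set K) : ℝ :=
  subC1dist K E E' S +
    ⨆ y : S, @Norm.norm (K →L[ℝ] K →L[ℝ] ℝ)
        (ContinuousLinearMap.hasOpNorm (𝕜 := ℝ) (𝕜₂ := ℝ) (σ₁₂ := RingHom.id ℝ) (E := K)
          (F := K →L[ℝ] ℝ))
        (fderiv ℝ (fun z => fderiv ℝ E' z) y.1
        - restrict2 K (fderiv ℝ (fun z => fderiv ℝ E z) (y.1 : H)))

open Filter
/-!
Every term of `𝓕(φ)(α)` other than `P^⊥_{φ'(α)} ∇E(φ(α))` is parallel to `φ'(α)`, while that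
term is orthogonal to `φ'(α)`; so `𝓕(φ) = 0` forces `P^⊥_{φ'(α)} ∇E(φ(α)) = 0`. Reparametrising
by normalised arc length multiplies the tangents by positive scalars, which leaves `P^⊥`
unchanged, and produces a curve of constant speed `L(φ)`, for which `Γ ≡ 0`. The
reparametrisation is the inverse of `α ↦ ∫₀^α |φ'| / L(φ)`, a function whose derivative is
bounded below by a positive constant.
-/

lemma inv_norm_smul_smul_of_pos {V : Type*} [NormedAddCommGroup V] [NormedSpace ℝ V] {c : ℝ}
    (hc : 0 < c) (v : V) : ‖c • v‖⁻¹ • c • v = ‖v‖⁻¹ • v := by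
  rw [norm_smul, Real.norm_of_nonneg hc.le, smul_smul]
  congr 1
  field_simp

section Projection

variable {V : Type*} [NormedAddCommGroup V] [InnerProductSpace ℝ V]

lemma Pproj_smul_of_pos {c : ℝ} (hc : 0 < c) (v y : V) : Pproj (c • v) y = Pproj v y := by
  simp only [Pproj, inv_norm_smul_smul_of_pos hc]

lemma Pperp_smul_of_pos {c : ℝ} (hc : 0 < c) (v y : V) : Pperp (c • v) y = Pperp v y := by
  simp only [Pperp, Pproj_smul_of_pos hc]

lemma Pproj_mem_span (v y : V) : Pproj v y ∈ ℝ ∙ v :=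
  Submodule.smul_mem _ _ (Submodule.smul_mem _ _ (Submodule.mem_span_singleton_self v))

lemma Pperp_mem_orthogonal (v y : V) : Pperp v y ∈ (ℝ ∙ v)ᗮ := by
  rw [Submodule.mem_orthogonal_singleton_iff_inner_right]
  rcases eq_or_ne v 0 with rfl | hv
  · simp
  have hv' : ‖v‖ ≠ 0 := norm_ne_zero_iff.2 hv
  simp only [Pperp, Pproj, inner_sub_right, real_inner_smul_right,
    real_inner_self_eq_norm_sq, real_inner_comm v y]
  field_simp
  ring

lemma Pperp_eq_zero_of_add_mem_span {v y w : V} (hw : w ∈ ℝ ∙ v) (h : Pperp v y + w = 0) :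
    Pperp v y = 0 := by
  have hmem : Pperp v y ∈ ℝ ∙ v := by
    rw [eq_neg_of_add_eq_zero_left h]
    exact neg_mem hw
  have : Pperp v y ∈ (ℝ ∙ v) ⊓ (ℝ ∙ v)ᗮ := ⟨hmem, Pperp_mem_orthogonal v y⟩
  rwa [Submodule.inf_orthogonal_eq_bot, Submodule.mem_bot] at this

end Projection

lemma Pperp_eq_zero_of_Fop_eq_zero {E : H → ℝ} {sbar σA σB : ℝ} {φ φ' : ℝ → H} {α : ℝ}
    (h : Fop E sbar σA σB φ φ' α = 0) : Pperp (φ' α) (gradient E (φ α)) = 0 := by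
  have hFop : Fop E sbar σA σB φ φ' α = Pperp (φ' α) (gradient E (φ α)) +
      (-(((‖φ' α‖ - len φ') / len φ') • Pproj (φ' α) (gradient E (φ α)))
        + (α * (α - 1) * ‖φ' α‖ / (sbar * (sbar - 1) * len φ')) •
            Pproj (φ' α) (gradient E (φ sbar))
        + ((σA + σB) * (Gam φ' α - α * (α - 1) / (sbar * (sbar - 1)) * Gam φ' sbar)) •
            (‖φ' α‖⁻¹ • φ' α)) := by
    rw [Fop]
    abel
  refine Pperp_eq_zero_of_add_mem_span ?_ (hFop ▸ h)
  exact add_mem (add_mem (neg_mem (Submodule.smul_mem _ _ (Pproj_mem_span _ _)))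
    (Submodule.smul_mem _ _ (Pproj_mem_span _ _)))
    (Submodule.smul_mem _ _ (Submodule.smul_mem _ _ (Submodule.mem_span_singleton_self _)))

lemma exists_orderIso_eq_integral {ρ : ℝ → ℝ} (hρ : Continuous ρ) {m : ℝ} (hm : 0 < m)
    (hρm : ∀ s, m ≤ ρ s) :
    ∃ e : ℝ ≃o ℝ, (∀ α, e α = ∫ s in (0:ℝ)..α, ρ s) ∧
      ∀ β, HasDerivAt e.symm (ρ (e.symm β))⁻¹ β := by
  set f : ℝ → ℝ := fun α => ∫ s in (0:ℝ)..α, ρ s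
  have hf : ∀ α, HasDerivAt f (ρ α) α := fun α => (hρ.integral_hasStrictDerivAt 0 α).hasDerivAt
  have hf0 : f 0 = 0 := intervalIntegral.integral_same
  have hgrowth : ∀ ⦃x y⦄, x ≤ y → m * (y - x) ≤ f y - f x :=
    mul_sub_le_image_sub_of_le_deriv (fun x => (hf x).differentiableAt)
      fun x => (hf x).deriv ▸ hρm x
  have hmono : StrictMono f := strictMono_of_deriv_pos fun x => (hf x).deriv ▸ hm.trans_le (hρm x)
  have htop : Tendsto f atTop atTop :=
    tendsto_atTop_mono' atTop ((eventually_ge_atTop 0).mono fun x hx => by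
      show m * x ≤ f x
      linarith [hgrowth hx]) (tendsto_id.const_mul_atTop hm)
  have hbot : Tendsto f atBot atBot :=
    tendsto_atBot_mono' atBot ((eventually_le_atBot 0).mono fun x hx => by
      show f x ≤ m * x
      linarith [hgrowth hx]) (tendsto_id.const_mul_atBot hm)
  let e := hmono.orderIsoOfSurjective f (continuous_iff_continuousAt.2
    (fun x => (hf x).continuousAt) |>.surjective htop hbot)
  refine ⟨e, fun α => rfl, fun β => ?_⟩
  exact (hf _).of_local_left_inverse e.symm.continuous.continuousAt
    (hm.trans_le (hρm _)).ne' (Eventually.of_forall e.apply_symm_apply)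

section ArcLength

variable {F : Type*} [NormedAddCommGroup F]

lemma len_pos {φ' : ℝ → F} (hφ' : ContinuousOn φ' (Icc 0 1))
    (hne : ∀ α ∈ Icc (0:ℝ) 1, φ' α ≠ 0) : 0 < len φ' :=
  intervalIntegral.intervalIntegral_pos_of_pos_on
    (hφ'.norm.intervalIntegrable_of_Icc zero_le_one)
    (fun s hs => norm_pos_iff.2 (hne s (Ioo_subset_Icc_self hs))) zero_lt_one

lemma Gam_eq_zero_of_norm_eq {ψ' : ℝ → F} {c : ℝ} (h : ∀ s ∈ Icc (0:ℝ) 1, ‖ψ' s‖ = c) :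
    ∀ α ∈ Icc (0:ℝ) 1, Gam ψ' α = 0 := by
  have hint : ∀ α ∈ Icc (0:ℝ) 1, ∫ s in (0:ℝ)..α, ‖ψ' s‖ = α * c := fun α hα => by
    rw [intervalIntegral.integral_congr (g := fun _ => c) fun s hs =>
      h s (Icc_subset_Icc_right hα.2 (uIcc_of_le hα.1 ▸ hs)), intervalIntegral.integral_const,
      smul_eq_mul, sub_zero]
  intro α hα
  rw [Gam, len, hint α hα, hint 1 ⟨zero_le_one, le_rfl⟩, one_mul, sub_self]

lemma exists_arcLength_inverse {φ' : ℝ → F} (hφ' : ContinuousOn φ' (Icc 0 1))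
    (hne : ∀ α ∈ Icc (0:ℝ) 1, φ' α ≠ 0) :
    ∃ g : ℝ → ℝ, Continuous g ∧ MapsTo g (Icc 0 1) (Icc 0 1) ∧ g 0 = 0 ∧ g 1 = 1 ∧
      (∀ α ∈ Icc (0:ℝ) 1, g ((∫ s in (0:ℝ)..α, ‖φ' s‖) / len φ') = α) ∧
      ∀ β ∈ Icc (0:ℝ) 1, HasDerivAt g (len φ' / ‖φ' (g β)‖) β := by
  set L := len φ'
  have hL := len_pos hφ' hne
  obtain ⟨s₀, hs₀, hmin⟩ :=
    isCompact_Icc.exists_isMinOn (nonempty_Icc.2 zero_le_one) hφ'.norm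
  set ρ : ℝ → ℝ := fun s => ‖φ' (projIcc (0:ℝ) 1 zero_le_one s)‖ / L
  have hφ'_ext : Continuous fun s => φ' (projIcc (0:ℝ) 1 zero_le_one s) :=
    hφ'.comp_continuous continuous_projIcc.subtype_val fun s => (projIcc _ _ _ s).2
  have hρ : Continuous ρ := hφ'_ext.norm.div_const L
  have hρm : ∀ s, ‖φ' s₀‖ / L ≤ ρ s := fun s =>
    div_le_div_of_nonneg_right (hmin (projIcc _ _ _ s).2) hL.le
  have hρ_of_mem : ∀ s ∈ Icc (0:ℝ) 1, ρ s = ‖φ' s‖ / L := fun s hs => by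
    simp only [ρ, projIcc_of_mem zero_le_one hs]
  obtain ⟨e, he, he'⟩ :=
    exists_orderIso_eq_integral hρ (div_pos (norm_pos_iff.2 (hne s₀ hs₀)) hL) hρm
  have he_of_mem : ∀ α ∈ Icc (0:ℝ) 1, e α = (∫ s in (0:ℝ)..α, ‖φ' s‖) / L := fun α hα => by
    rw [he, ← intervalIntegral.integral_div]
    exact intervalIntegral.integral_congr fun s hs =>
      hρ_of_mem s (Icc_subset_Icc_right hα.2 (uIcc_of_le hα.1 ▸ hs))
  have hg_he : ∀ α ∈ Icc (0:ℝ) 1, e.symm ((∫ s in (0:ℝ)..α, ‖φ' s‖) / L) = α := fun α hα => by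
    rw [← he_of_mem α hα, e.symm_apply_apply]
  have hg0 : e.symm 0 = 0 := by
    simpa using hg_he 0 ⟨le_rfl, zero_le_one⟩
  have hg1 : e.symm 1 = 1 := by
    have := hg_he 1 ⟨zero_le_one, le_rfl⟩
    rwa [show (∫ s in (0:ℝ)..1, ‖φ' s‖) = L from rfl, div_self hL.ne'] at this
  have hmaps : MapsTo e.symm (Icc 0 1) (Icc 0 1) := fun β hβ =>
    ⟨hg0 ▸ e.symm.monotone hβ.1, hg1 ▸ e.symm.monotone hβ.2⟩
  refine ⟨e.symm, e.symm.continuous, hmaps, hg0, hg1, hg_he, fun β hβ => ?_⟩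
  simpa only [hρ_of_mem _ (hmaps hβ), inv_div] using he' β

end ArcLength

lemma C1On.comp_of_hasDerivAt {F : Type*} [NormedAddCommGroup F] [NormedSpace ℝ F]
    {a b c d : ℝ} {φ φ' : ℝ → F} (hφ : C1On a b φ φ') {g g' : ℝ → ℝ}
    (hg : MapsTo g (Icc c d) (Icc a b)) (hgd : ∀ β ∈ Icc c d, HasDerivAt g (g' β) β)
    (hg' : ContinuousOn g' (Icc c d)) :
    C1On c d (φ ∘ g) (fun β => g' β • φ' (g β)) :=
  ⟨fun β hβ => (hφ.1 _ (hg hβ)).scomp β (hgd β hβ).hasDerivWithinAt hg,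
    hg'.smul (hφ.2.comp (fun β hβ => (hgd β hβ).continuousAt.continuousWithinAt) hg)⟩

lemma InU.comp {V : Type*} [NormedAddCommGroup V] [InnerProductSpace ℝ V] {yA yB : V}
    {φ φ' : ℝ → V} (hφ : InU yA yB φ φ') {g g' : ℝ → ℝ} (hg : MapsTo g (Icc 0 1) (Icc 0 1))
    (hg0 : g 0 = 0) (hg1 : g 1 = 1) (hgd : ∀ β ∈ Icc (0:ℝ) 1, HasDerivAt g (g' β) β)
    (hg' : ContinuousOn g' (Icc 0 1)) (hg'_ne : ∀ β ∈ Icc (0:ℝ) 1, g' β ≠ 0) :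
    InU yA yB (φ ∘ g) (fun β => g' β • φ' (g β)) :=
  ⟨hφ.1.comp_of_hasDerivAt hg hgd hg', by rw [Function.comp_apply, hg0, hφ.2.1],
    by rw [Function.comp_apply, hg1, hφ.2.2.1],
    fun β hβ => smul_ne_zero (hg'_ne β hβ) (hφ.2.2.2 _ (hg hβ))⟩

theorem stmt2_general
    (E : H → ℝ)
    (yA yB : H) (sbar : ℝ)
    (σA σB : ℝ)
    (φ φ' : ℝ → H) (hφ : InU yA yB φ φ')
    (hF : ∀ α ∈ Icc (0:ℝ) 1, Fop E sbar σA σB φ φ' α = 0) :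
    ∃ φt φt' : ℝ → H,
      (∀ α ∈ Icc (0:ℝ) 1, φt ((∫ s in (0:ℝ)..α, ‖φ' s‖) / len φ') = φ α) ∧
      InU yA yB φt φt' ∧ SolvesMEP E φt φt' := by
  have hφ' := hφ.1.2
  have hne := hφ.2.2.2
  obtain ⟨g, hgc, hmaps, hg0, hg1, hg_inv, hgd⟩ := exists_arcLength_inverse hφ' hne
  have hφ'g_ne : ∀ β ∈ Icc (0:ℝ) 1, ‖φ' (g β)‖ ≠ 0 := fun β hβ =>
    norm_ne_zero_iff.2 (hne _ (hmaps hβ))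
  have hspeed_pos : ∀ β ∈ Icc (0:ℝ) 1, 0 < len φ' / ‖φ' (g β)‖ := fun β hβ =>
    div_pos (len_pos hφ' hne) (norm_pos_iff.2 (hne _ (hmaps hβ)))
  have hspeed_cont : ContinuousOn (fun β => len φ' / ‖φ' (g β)‖) (Icc 0 1) :=
    continuousOn_const.div (hφ'.comp hgc.continuousOn hmaps).norm hφ'g_ne
  refine ⟨φ ∘ g, fun β => (len φ' / ‖φ' (g β)‖) • φ' (g β), fun α hα => congrArg φ (hg_inv α hα),
    hφ.comp hmaps hg0 hg1 hgd hspeed_cont fun β hβ => (hspeed_pos β hβ).ne', fun β hβ => ?_,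
    Gam_eq_zero_of_norm_eq (c := len φ') fun β hβ => ?_⟩
  · rw [Pperp_smul_of_pos (hspeed_pos β hβ)]
    exact Pperp_eq_zero_of_Fop_eq_zero (hF _ (hmaps hβ))
  · rw [norm_smul, Real.norm_of_nonneg (hspeed_pos β hβ).le, div_mul_cancel₀ _ (hφ'g_ne β hβ)]

theorem stmt2
    (E : H → ℝ) (hE : ContDiff ℝ 3 E)
    (hess : H → H →L[ℝ] H) (hhess : ∀ y : H, HasFDerivAt (gradient E) (hess y) y)
    (yA yB : H) (φb φb' φb'' : ℝ → H) (sbar : ℝ)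
    (hA : AssumpA E hess yA yB φb φb' φb'' sbar)
    (σA σB : ℝ)
    (hσA : HasDerivWithinAt (lamBar E φb φb') σA (Icc (0:ℝ) 1) 0)
    (hσB : HasDerivWithinAt (lamBar E φb φb') σB (Icc (0:ℝ) 1) 1)
    (φ φ' : ℝ → H) (hφ : InU yA yB φ φ')
    (hF : ∀ α ∈ Icc (0:ℝ) 1, Fop E sbar σA σB φ φ' α = 0) :
    ∃ φt φt' : ℝ → H,
      (∀ α ∈ Icc (0:ℝ) 1, φt ((∫ s in (0:ℝ)..α, ‖φ' s‖) / len φ') = φ α) ∧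
      InU yA yB φt φt' ∧ SolvesMEP E φt φt' :=
  stmt2_general E yA yB sbar σA σB φ φ' hφ hF
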